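/- arXiv:math/0411140 — 6 statements merged into one kernel-verified Lean document; each statement's English description precedes it below -/
import Mathlib

section
/- Let x, k, j be positive integers with x ≡ -1 (mod 2^k), 1 ≤ j ≤ k, and j ≡ 1 or 5 (mod 6). Then m = (2^j + 1)/3 is an integer with m ≡ 1 or 5 (mod 6), the j-th iterate of the 3x+1 function T applied to m·x equals x + (x+1)/2^j, and this value is ≤ ((2^j + 2)/2^j)·x. -/
/-- The 3x+1 function on the integers. -/
def collatzT (n : ℤ) : ℤ := if 2 ∣ n then n / 2 else (3 * n + 1) / 2

lemma collatzT_iter_pow (a : ℤ) : ∀ i : ℕ, collatzT^[i] (2 ^ i * a) = a := by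
  intro i
  induction i with
  | zero => simp
  | succ n ih =>
    rw [Function.iterate_succ_apply]
    have h1 : collatzT (2 ^ (n + 1) * a) = 2 ^ n * a := by
      have h2 : (2 : ℤ) ^ (n + 1) * a = 2 * (2 ^ n * a) := by ring
      rw [h2]
      have hdvd : (2 : ℤ) ∣ 2 * (2 ^ n * a) := ⟨2 ^ n * a, by ring⟩
      simp only [collatzT, if_pos hdvd]
      exact Int.mul_ediv_cancel_left _ two_ne_zero
    rw [h1, ih]

theorem modified_iteration (x : ℤ) (k j : ℕ) (hx : 0 < x) (hk : 0 < k) (hj : 0 < j)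
    (hjk : j ≤ k) (hxmod : x ≡ -1 [ZMOD (2 ^ k)])
    (hjmod : j % 6 = 1 ∨ j % 6 = 5) :
    (3 : ℤ) ∣ 2 ^ j + 1 ∧
    (((2 ^ j + 1 : ℤ) / 3) % 6 = 1 ∨ ((2 ^ j + 1 : ℤ) / 3) % 6 = 5) ∧
    collatzT^[j] (((2 ^ j + 1) / 3) * x) = x + (x + 1) / 2 ^ j ∧
    collatzT^[j] (((2 ^ j + 1) / 3) * x) * 2 ^ j ≤ (2 ^ j + 2) * x := by
  -- 2^j mod 9
  have hmod9 : (2 : ℤ) ^ j % 9 = 2 ^ (j % 6) % 9 := by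
    have key : (2 : ℤ) ^ j ≡ 2 ^ (j % 6) [ZMOD 9] := by
      calc (2 : ℤ) ^ j = (64 : ℤ) ^ (j / 6) * 2 ^ (j % 6) := by
            rw [show (64 : ℤ) = 2 ^ 6 by norm_num, ← pow_mul, ← pow_add]
            congr 1
            omega
        _ ≡ 1 ^ (j / 6) * 2 ^ (j % 6) [ZMOD 9] :=
            (Int.ModEq.pow _ (by decide)).mul_right _
        _ = 2 ^ (j % 6) := by rw [one_pow, one_mul]
    simpa [Int.ModEq] using key
  have hp9 : (2 : ℤ) ^ j % 9 = 2 ∨ (2 : ℤ) ^ j % 9 = 5 := by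
    rcases hjmod with h | h <;> rw [hmod9, h] <;> norm_num
  have hpeven : (2 : ℤ) ^ j % 2 = 0 := by
    have h2 : (2 : ℤ) ∣ 2 ^ j := dvd_pow_self 2 (by omega)
    omega
  have h3 : (3 : ℤ) ∣ 2 ^ j + 1 := by
    rcases hp9 with h | h <;>
    · generalize (2 : ℤ) ^ j = p at h hpeven
      omega
  set m : ℤ := (2 ^ j + 1) / 3 with hm_def
  have hm : 3 * m = 2 ^ j + 1 := Int.mul_ediv_cancel' h3
  have hmmod : m % 6 = 1 ∨ m % 6 = 5 := by
    rcases hp9 with h | h <;>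
    · generalize (2 : ℤ) ^ j = p at h hpeven hm
      omega
  -- divisibility of x + 1
  have hdvdk : ((2 : ℤ) ^ k) ∣ x + 1 := by
    have h := hxmod.dvd
    have hx1 : x + 1 = -(-1 - x) := by ring
    rw [hx1]
    exact dvd_neg.mpr h
  have hdvdj : ((2 : ℤ) ^ j) ∣ x + 1 := dvd_trans (pow_dvd_pow 2 hjk) hdvdk
  set d : ℤ := (x + 1) / 2 ^ j with hd_def
  have hd : (2 : ℤ) ^ j * d = x + 1 := Int.mul_ediv_cancel' hdvdj
  -- parities
  have hxodd : x % 2 = 1 := by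
    have h2 : (2 : ℤ) ∣ x + 1 := dvd_trans (dvd_pow_self 2 (by omega)) hdvdk
    omega
  have hmodd : m % 2 = 1 := by
    generalize (2 : ℤ) ^ j = p at hpeven hm
    omega
  have hmxodd : (m * x) % 2 = 1 := by
    have := Int.mul_emod m x 2
    rw [hmodd, hxodd] at this
    omega
  have hnd : ¬ (2 : ℤ) ∣ m * x := by
    intro hdd
    rw [Int.dvd_iff_emod_eq_zero] at hdd
    omega
  -- main iteration
  obtain ⟨n, rfl⟩ : ∃ n, j = n + 1 := ⟨j - 1, by omega⟩
  have hstep : collatzT (m * x) = 2 ^ n * (x + d) := by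
    have h1 : 3 * (m * x) + 1 = 2 * (2 ^ n * (x + d)) := by
      linear_combination x * hm - hd
    simp only [collatzT, if_neg hnd, h1]
    exact Int.mul_ediv_cancel_left _ two_ne_zero
  have hiter : collatzT^[n + 1] (m * x) = x + d := by
    rw [Function.iterate_succ_apply, hstep, collatzT_iter_pow]
  refine ⟨h3, hmmod, hiter, ?_⟩
  rw [hiter]
  nlinarith [hd, hx]
end

section
/- Let x, k, j be positive integers with x ≡ -1 (mod 2^k), 1 ≤ j ≤ k, j ≡ 1 or 5 (mod 6), and set m = (2^j+1)/3. Then T^j(mx) ≡ -1 (mod 2^{k-j}); and if additionally x ≢ -1 (mod 2^{k+1}), then T^j(mx) ≢ -1 (mod 2^{k+1-j}). -/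
theorem modified_iteration_congruence (x : ℤ) (k j : ℕ) (hx : 0 < x) (hk : 0 < k)
    (hj : 0 < j) (hjk : j ≤ k) (hxmod : x ≡ -1 [ZMOD (2 ^ k)])
    (hjmod : j % 6 = 1 ∨ j % 6 = 5) :
    collatzT^[j] (((2 ^ j + 1) / 3) * x) ≡ -1 [ZMOD (2 ^ (k - j))] ∧
    (¬ (x ≡ -1 [ZMOD (2 ^ (k + 1))]) →
      ¬ (collatzT^[j] (((2 ^ j + 1) / 3) * x) ≡ -1 [ZMOD (2 ^ (k + 1 - j))])) := by
  set m : ℤ := (2 ^ j + 1) / 3 with hmdef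
  -- j is odd
  have hjodd : Odd j := by rcases hjmod with h | h <;> exact Nat.odd_iff.mpr (by omega)
  -- 3 ∣ 2^j + 1
  have h3 : (3 : ℤ) ∣ 2 ^ j + 1 := by
    have h2 : (2 : ℤ) ≡ -1 [ZMOD 3] := by decide
    have hp := h2.pow j
    rw [hjodd.neg_one_pow] at hp
    obtain ⟨c, hc⟩ := Int.ModEq.dvd hp
    exact ⟨-c, by linarith⟩
  have hm : 3 * m = 2 ^ j + 1 := Int.mul_ediv_cancel' h3
  -- x + 1 = 2^k * t
  obtain ⟨c, hc⟩ := Int.ModEq.dvd hxmod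
  set t : ℤ := -c with htdef
  have ht : x + 1 = 2 ^ k * t := by simp only [htdef]; linarith
  -- m is odd
  have h2j : (2 : ℤ) ^ j = 2 * 2 ^ (j - 1) := by
    conv_lhs => rw [show j = (j - 1) + 1 from by omega]
    ring
  have h2k : (2 : ℤ) ^ k = 2 * 2 ^ (k - 1) := by
    conv_lhs => rw [show k = (k - 1) + 1 from by omega]
    ring
  have hmodd : ¬ (2 : ℤ) ∣ m := by
    rintro ⟨c, hc⟩
    have hm' := hm
    rw [hc] at hm'
    have h1 : (2 : ℤ) ∣ 1 := ⟨3 * c - 2 ^ (j - 1), by linear_combination -hm' - h2j⟩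
    norm_num at h1
  have hxodd : ¬ (2 : ℤ) ∣ x := by
    rintro ⟨c, hc⟩
    have ht' := ht
    rw [hc] at ht'
    have h1 : (2 : ℤ) ∣ 1 := ⟨2 ^ (k - 1) * t - c, by linear_combination ht' + t * h2k⟩
    norm_num at h1
  have hmxodd : ¬ (2 : ℤ) ∣ m * x := by
    rintro hdvd
    rcases (Int.prime_two.dvd_mul.mp hdvd) with h | h
    · exact hmodd h
    · exact hxodd h
  -- the key iteration formula
  have key : ∀ i, i ≤ j → 1 ≤ i →
      collatzT^[i] (m * x) = 2 ^ (j - i) * x + 2 ^ (k - i) * t := by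
    intro i
    induction i with
    | zero => intro _ h; omega
    | succ n ih =>
      intro hle _
      rcases Nat.eq_zero_or_pos n with rfl | hn
      · rw [Function.iterate_succ_apply', Function.iterate_zero_apply]
        rw [collatzT, if_neg hmxodd]
        have hnum : 3 * (m * x) + 1 = 2 * (2 ^ (j - 1) * x + 2 ^ (k - 1) * t) := by
          linear_combination x * hm + ht + x * h2j + t * h2k
        rw [hnum, Int.mul_ediv_cancel_left _ two_ne_zero]
      · have hprev := ih (by omega) hn
        rw [Function.iterate_succ_apply', hprev, collatzT]
        have hjn : (2 : ℤ) ^ (j - n) = 2 * 2 ^ (j - (n + 1)) := by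
          conv_lhs => rw [show j - n = (j - (n + 1)) + 1 from by omega]
          ring
        have hkn : (2 : ℤ) ^ (k - n) = 2 * 2 ^ (k - (n + 1)) := by
          conv_lhs => rw [show k - n = (k - (n + 1)) + 1 from by omega]
          ring
        have hnum : 2 ^ (j - n) * x + 2 ^ (k - n) * t
            = 2 * (2 ^ (j - (n + 1)) * x + 2 ^ (k - (n + 1)) * t) := by
          rw [hjn, hkn]; ring
        rw [if_pos ⟨_, hnum⟩, hnum, Int.mul_ediv_cancel_left _ two_ne_zero]
  have hfin : collatzT^[j] (m * x) = x + 2 ^ (k - j) * t := by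
    have := key j le_rfl hj
    rwa [Nat.sub_self, pow_zero, one_mul] at this
  have hkj : (2 : ℤ) ^ (k - j) * 2 ^ j = 2 ^ k := by
    rw [← pow_add]; congr 1; omega
  constructor
  · rw [Int.modEq_iff_dvd, hfin]
    exact ⟨-(2 ^ j * t) - t, by linear_combination -ht + t * hkj⟩
  · intro hx2 habs
    -- t is odd
    have htodd : ¬ (2 : ℤ) ∣ t := by
      rintro ⟨s, hs⟩
      apply hx2
      rw [Int.modEq_iff_dvd]
      refine ⟨-s, ?_⟩
      have : (2 : ℤ) ^ (k + 1) = 2 ^ k * 2 := by rw [pow_succ]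
      rw [this]
      linear_combination -ht - 2 ^ k * hs
    rw [hfin, Int.modEq_iff_dvd] at habs
    obtain ⟨c, hc⟩ := habs
    have h2k1j : (2 : ℤ) ^ (k + 1 - j) = 2 ^ (k - j) * 2 := by
      rw [← pow_succ]; congr 1; omega
    have hkey2 : (2 : ℤ) ^ (k - j) * (t * 2 ^ j + t + 2 * c) = 2 ^ (k - j) * 0 := by
      rw [h2k1j] at hc
      linear_combination -hc - ht + t * hkj
    have hz : t * 2 ^ j + t + 2 * c = 0 :=
      mul_left_cancel₀ (pow_ne_zero _ two_ne_zero) hkey2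
    have he : t * 2 ^ j = 2 * (t * 2 ^ (j - 1)) := by rw [h2j]; ring
    rw [he] at hz
    obtain ⟨s, hs⟩ : ∃ s, t = 2 * s + 1 := by
      rcases Int.even_or_odd t with h | h
      · exact absurd h.two_dvd htodd
      · obtain ⟨s, hs⟩ := h; exact ⟨s, hs⟩
    generalize t * 2 ^ (j - 1) = e at hz
    omega
end

section
/- For every prime q ≥ 256, the number of integers s with 0 < s < 6q, gcd(s, 6q) = 1, and all prime factors of s strictly less than q, is strictly greater than q - 1. -/
private lemma fcount : ∀ n : ℕ,
    (((Finset.range n).filter (fun t => t % 6 = 1 ∨ t % 6 = 5)).card) = (n+4)/6 + n/6 := by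
  intro n
  induction n with
  | zero => simp
  | succ n ih =>
    rw [Finset.range_add_one, Finset.filter_insert]
    by_cases h : n % 6 = 1 ∨ n % 6 = 5
    · rw [if_pos h, Finset.card_insert_of_notMem (by simp)]
      omega
    · rw [if_neg h]
      omega

private lemma cnt (a b : ℕ) (h : a ≤ b) :
    (((Finset.Ioc a b).filter (fun t => t % 6 = 1 ∨ t % 6 = 5)).card)
      + ((a+5)/6 + (a+1)/6) = (b+5)/6 + (b+1)/6 := by
  have e2 : (Finset.range (b+1)).filter (fun t => t % 6 = 1 ∨ t % 6 = 5) \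
      (Finset.range (a+1)).filter (fun t => t % 6 = 1 ∨ t % 6 = 5)
      = (Finset.Ioc a b).filter (fun t => t % 6 = 1 ∨ t % 6 = 5) := by
    ext x
    simp only [Finset.mem_filter, Finset.mem_sdiff, Finset.mem_Ioc, Finset.mem_range]
    omega
  have hsub : (Finset.range (a+1)).filter (fun t => t % 6 = 1 ∨ t % 6 = 5) ⊆
      (Finset.range (b+1)).filter (fun t => t % 6 = 1 ∨ t % 6 = 5) :=
    Finset.filter_subset_filter _ (Finset.range_subset_range.mpr (by omega))
  have e3 := Finset.card_sdiff_add_card_eq_card hsub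
  rw [e2] at e3
  have f1 := fcount (a+1)
  have f2 := fcount (b+1)
  omega

private lemma mod_iff (t : ℕ) : Nat.gcd t 6 = 1 ↔ (t % 6 = 1 ∨ t % 6 = 5) := by
  have h1 : Nat.gcd t 6 = Nat.gcd (t % 6) 6 := by
    conv_lhs => rw [Nat.gcd_comm]
    rw [Nat.gcd_rec]
  rw [h1]
  rcases (show t % 6 = 0 ∨ t % 6 = 1 ∨ t % 6 = 2 ∨ t % 6 = 3 ∨ t % 6 = 4 ∨ t % 6 = 5 by omega)
    with h|h|h|h|h|h <;> rw [h] <;> decide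

def AA (q m hi : ℕ) : Finset ℕ :=
  Finset.image (fun t => m * t) ((Finset.Ioc (q / m) hi).filter (fun t => t % 6 = 1 ∨ t % 6 = 5))

private lemma AA_card (q m hi : ℕ) (hm : 0 < m) (h : q / m ≤ hi) :
    (AA q m hi).card + ((q/m+5)/6 + (q/m+1)/6) = (hi+5)/6 + (hi+1)/6 := by
  unfold AA
  rw [Finset.card_image_of_injective _ (mul_right_injective₀ hm.ne')]
  exact cnt _ _ h

private lemma AA_lb {q m hi x : ℕ} (hm : 0 < m) (hx : x ∈ AA q m hi) : q < x := by
  unfold AA at hx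
  obtain ⟨t, ht, rfl⟩ := Finset.mem_image.mp hx
  have hlo := (Finset.mem_Ioc.mp (Finset.mem_filter.mp ht).1).1
  have h2 := (Nat.div_lt_iff_lt_mul hm).mp hlo
  rwa [Nat.mul_comm] at h2

private lemma AA_mem {q m hi s : ℕ} (hq : q.Prime) (h256 : 256 ≤ q) (hm0 : 0 < m)
    (hmlt : m < 256) (hm6 : Nat.gcd m 6 = 1) (hhi : hi < q) (hb : m * hi < 6 * q)
    (hs : s ∈ AA q m hi) :
    0 < s ∧ s < 6*q ∧ Nat.gcd s (6*q) = 1 ∧ ∀ p : ℕ, p.Prime → p ∣ s → p < q := by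
  unfold AA at hs
  obtain ⟨t, ht, rfl⟩ := Finset.mem_image.mp hs
  obtain ⟨htIoc, htp⟩ := Finset.mem_filter.mp ht
  obtain ⟨hlo, hhi'⟩ := Finset.mem_Ioc.mp htIoc
  have ht0 : 0 < t := lt_of_le_of_lt (Nat.zero_le _) hlo
  have htq : t < q := lt_of_le_of_lt hhi' hhi
  have ht6 : Nat.gcd t 6 = 1 := (mod_iff t).mpr htp
  have hs6 : Nat.Coprime (m*t) 6 := Nat.Coprime.mul hm6 ht6
  have hqs : ¬ q ∣ m * t := by
    intro hdvd
    rcases (Nat.Prime.dvd_mul hq).mp hdvd with h | h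
    · exact absurd (Nat.le_of_dvd hm0 h) (by omega)
    · exact absurd (Nat.le_of_dvd ht0 h) (by omega)
  have hsq : Nat.Coprime (m*t) q :=
    Nat.Coprime.symm ((Nat.Prime.coprime_iff_not_dvd hq).mpr hqs)
  refine ⟨Nat.mul_pos hm0 ht0, ?_, Nat.Coprime.mul_right hs6 hsq, ?_⟩
  · calc m*t ≤ m*hi := Nat.mul_le_mul_left m hhi'
    _ < 6*q := hb
  · intro p hp hpd
    rcases (Nat.Prime.dvd_mul hp).mp hpd with h | h
    · have := Nat.le_of_dvd hm0 h; omega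
    · have := Nat.le_of_dvd ht0 h; omega

private lemma AA_inter (q m1 m2 hi1 hi2 d : ℕ) (h1 : 0 < m1) (h2 : 0 < m2)
    (hco : Nat.Coprime m1 m2) (hb1 : m1 * hi1 ≤ 6*q-1) (hd : m1 * m2 = d) :
    AA q m1 hi1 ∩ AA q m2 hi2 ⊆ AA q d ((6*q-1)/d) := by
  intro n hn
  obtain ⟨hn1, hn2⟩ := Finset.mem_inter.mp hn
  unfold AA at hn1 hn2 ⊢
  obtain ⟨t1, ht1, he1⟩ := Finset.mem_image.mp hn1
  obtain ⟨t2, ht2, he2⟩ := Finset.mem_image.mp hn2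
  obtain ⟨ht1Ioc, ht1p⟩ := Finset.mem_filter.mp ht1
  obtain ⟨hlo1, hhi1⟩ := Finset.mem_Ioc.mp ht1Ioc
  have hdpos : 0 < d := hd ▸ Nat.mul_pos h1 h2
  have hm2 : m2 ∣ m1 * t1 := ⟨t2, by rw [he1, ← he2]⟩
  have hm2t1 : m2 ∣ t1 := Nat.Coprime.dvd_of_dvd_mul_left (Nat.Coprime.symm hco) hm2
  obtain ⟨u, hu⟩ := hm2t1
  have hnu : n = d * u := by rw [← hd, ← he1, hu]; ring
  have hu6 : Nat.gcd u 6 = 1 :=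
    Nat.Coprime.coprime_dvd_left ⟨m2, by rw [hu]; ring⟩ ((mod_iff t1).mpr ht1p)
  have hqn : q < n := by
    have h3 := (Nat.div_lt_iff_lt_mul h1).mp hlo1
    have : n = m1 * t1 := he1.symm
    rw [this]
    rwa [Nat.mul_comm] at h3
  have hn6 : n ≤ 6*q-1 := by
    rw [← he1]
    calc m1*t1 ≤ m1*hi1 := Nat.mul_le_mul_left m1 hhi1
    _ ≤ 6*q-1 := hb1
  refine Finset.mem_image.mpr ⟨u, Finset.mem_filter.mpr ⟨Finset.mem_Ioc.mpr ⟨?_, ?_⟩,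
    (mod_iff u).mp hu6⟩, hnu.symm⟩
  · have : q < u * d := by rw [Nat.mul_comm, ← hnu]; exact hqn
    exact (Nat.div_lt_iff_lt_mul hdpos).mpr this
  · have : u * d ≤ 6*q-1 := by rw [Nat.mul_comm, ← hnu]; exact hn6
    exact (Nat.le_div_iff_mul_le hdpos).mpr this


private lemma linp35 (q : ℕ) (h256 : 256 ≤ q) :
    3*35*(((((6*q-1)/35)+5)/6 + (((6*q-1)/35)+1)/6) - (((q/35)+5)/6 + ((q/35)+1)/6)) ≤ 5*q + 6*35 := by omega

private lemma linp55 (q : ℕ) (h256 : 256 ≤ q) :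
    3*55*(((((6*q-1)/55)+5)/6 + (((6*q-1)/55)+1)/6) - (((q/55)+5)/6 + ((q/55)+1)/6)) ≤ 5*q + 6*55 := by omega

private lemma linp65 (q : ℕ) (h256 : 256 ≤ q) :
    3*65*(((((6*q-1)/65)+5)/6 + (((6*q-1)/65)+1)/6) - (((q/65)+5)/6 + ((q/65)+1)/6)) ≤ 5*q + 6*65 := by omega

private lemma linp85 (q : ℕ) (h256 : 256 ≤ q) :
    3*85*(((((6*q-1)/85)+5)/6 + (((6*q-1)/85)+1)/6) - (((q/85)+5)/6 + ((q/85)+1)/6)) ≤ 5*q + 6*85 := by omega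

private lemma linp95 (q : ℕ) (h256 : 256 ≤ q) :
    3*95*(((((6*q-1)/95)+5)/6 + (((6*q-1)/95)+1)/6) - (((q/95)+5)/6 + ((q/95)+1)/6)) ≤ 5*q + 6*95 := by omega

private lemma linp115 (q : ℕ) (h256 : 256 ≤ q) :
    3*115*(((((6*q-1)/115)+5)/6 + (((6*q-1)/115)+1)/6) - (((q/115)+5)/6 + ((q/115)+1)/6)) ≤ 5*q + 6*115 := by omega

private lemma linp77 (q : ℕ) (h256 : 256 ≤ q) :
    3*77*(((((6*q-1)/77)+5)/6 + (((6*q-1)/77)+1)/6) - (((q/77)+5)/6 + ((q/77)+1)/6)) ≤ 5*q + 6*77 := by omega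

private lemma linp91 (q : ℕ) (h256 : 256 ≤ q) :
    3*91*(((((6*q-1)/91)+5)/6 + (((6*q-1)/91)+1)/6) - (((q/91)+5)/6 + ((q/91)+1)/6)) ≤ 5*q + 6*91 := by omega

private lemma linp119 (q : ℕ) (h256 : 256 ≤ q) :
    3*119*(((((6*q-1)/119)+5)/6 + (((6*q-1)/119)+1)/6) - (((q/119)+5)/6 + ((q/119)+1)/6)) ≤ 5*q + 6*119 := by omega

private lemma linp133 (q : ℕ) (h256 : 256 ≤ q) :
    3*133*(((((6*q-1)/133)+5)/6 + (((6*q-1)/133)+1)/6) - (((q/133)+5)/6 + ((q/133)+1)/6)) ≤ 5*q + 6*133 := by omega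

private lemma linp161 (q : ℕ) (h256 : 256 ≤ q) :
    3*161*(((((6*q-1)/161)+5)/6 + (((6*q-1)/161)+1)/6) - (((q/161)+5)/6 + ((q/161)+1)/6)) ≤ 5*q + 6*161 := by omega

private lemma linp143 (q : ℕ) (h256 : 256 ≤ q) :
    3*143*(((((6*q-1)/143)+5)/6 + (((6*q-1)/143)+1)/6) - (((q/143)+5)/6 + ((q/143)+1)/6)) ≤ 5*q + 6*143 := by omega

private lemma linp187 (q : ℕ) (h256 : 256 ≤ q) :
    3*187*(((((6*q-1)/187)+5)/6 + (((6*q-1)/187)+1)/6) - (((q/187)+5)/6 + ((q/187)+1)/6)) ≤ 5*q + 6*187 := by omega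

private lemma linp209 (q : ℕ) (h256 : 256 ≤ q) :
    3*209*(((((6*q-1)/209)+5)/6 + (((6*q-1)/209)+1)/6) - (((q/209)+5)/6 + ((q/209)+1)/6)) ≤ 5*q + 6*209 := by omega

private lemma linp253 (q : ℕ) (h256 : 256 ≤ q) :
    3*253*(((((6*q-1)/253)+5)/6 + (((6*q-1)/253)+1)/6) - (((q/253)+5)/6 + ((q/253)+1)/6)) ≤ 5*q + 6*253 := by omega

private lemma linp221 (q : ℕ) (h256 : 256 ≤ q) :
    3*221*(((((6*q-1)/221)+5)/6 + (((6*q-1)/221)+1)/6) - (((q/221)+5)/6 + ((q/221)+1)/6)) ≤ 5*q + 6*221 := by omega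

private lemma linp247 (q : ℕ) (h256 : 256 ≤ q) :
    3*247*(((((6*q-1)/247)+5)/6 + (((6*q-1)/247)+1)/6) - (((q/247)+5)/6 + ((q/247)+1)/6)) ≤ 5*q + 6*247 := by omega

private lemma linp299 (q : ℕ) (h256 : 256 ≤ q) :
    3*299*(((((6*q-1)/299)+5)/6 + (((6*q-1)/299)+1)/6) - (((q/299)+5)/6 + ((q/299)+1)/6)) ≤ 5*q + 6*299 := by omega

private lemma linp323 (q : ℕ) (h256 : 256 ≤ q) :
    3*323*(((((6*q-1)/323)+5)/6 + (((6*q-1)/323)+1)/6) - (((q/323)+5)/6 + ((q/323)+1)/6)) ≤ 5*q + 6*323 := by omega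

private lemma linp391 (q : ℕ) (h256 : 256 ≤ q) :
    3*391*(((((6*q-1)/391)+5)/6 + (((6*q-1)/391)+1)/6) - (((q/391)+5)/6 + ((q/391)+1)/6)) ≤ 5*q + 6*391 := by omega

private lemma linp437 (q : ℕ) (h256 : 256 ≤ q) :
    3*437*(((((6*q-1)/437)+5)/6 + (((6*q-1)/437)+1)/6) - (((q/437)+5)/6 + ((q/437)+1)/6)) ≤ 5*q + 6*437 := by omega

private lemma linT0 (q : ℕ) (h256 : 256 ≤ q) : q ≤ 3 * (((q-1)+5)/6 + ((q-1)+1)/6) + 3 := by omega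

private lemma lin5 (q : ℕ) (h256 : 256 ≤ q) : 4*q ≤ 15 * ((((q-1)+5)/6 + ((q-1)+1)/6) - (((q/5)+5)/6 + ((q/5)+1)/6)) + 30 := by omega

private lemma lin7 (q : ℕ) (h256 : 256 ≤ q) : 5*q ≤ 3*7 * (((((6*q-1)/7)+5)/6 + (((6*q-1)/7)+1)/6) - (((q/7)+5)/6 + ((q/7)+1)/6)) + 6*7 := by omega

private lemma lin11 (q : ℕ) (h256 : 256 ≤ q) : 5*q ≤ 3*11 * (((((6*q-1)/11)+5)/6 + (((6*q-1)/11)+1)/6) - (((q/11)+5)/6 + ((q/11)+1)/6)) + 6*11 := by omega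

private lemma lin13 (q : ℕ) (h256 : 256 ≤ q) : 5*q ≤ 3*13 * (((((6*q-1)/13)+5)/6 + (((6*q-1)/13)+1)/6) - (((q/13)+5)/6 + ((q/13)+1)/6)) + 6*13 := by omega

private lemma lin17 (q : ℕ) (h256 : 256 ≤ q) : 5*q ≤ 3*17 * (((((6*q-1)/17)+5)/6 + (((6*q-1)/17)+1)/6) - (((q/17)+5)/6 + ((q/17)+1)/6)) + 6*17 := by omega

private lemma lin19 (q : ℕ) (h256 : 256 ≤ q) : 5*q ≤ 3*19 * (((((6*q-1)/19)+5)/6 + (((6*q-1)/19)+1)/6) - (((q/19)+5)/6 + ((q/19)+1)/6)) + 6*19 := by omega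

private lemma lin23 (q : ℕ) (h256 : 256 ≤ q) : 5*q ≤ 3*23 * (((((6*q-1)/23)+5)/6 + (((6*q-1)/23)+1)/6) - (((q/23)+5)/6 + ((q/23)+1)/6)) + 6*23 := by omega

set_option maxHeartbeats 4000000 in
private lemma key (q c35 c55 c65 c85 c95 c115 c77 c91 c119 c133 c161 c143 c187 c209 c253 c221 c247 c299 c323 c391 c437 u : ℕ) (h256 : 256 ≤ q)
    (hc35 : c35 ≤ (((((6*q-1)/35)+5)/6 + (((6*q-1)/35)+1)/6) - (((q/35)+5)/6 + ((q/35)+1)/6)))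
    (hc55 : c55 ≤ (((((6*q-1)/55)+5)/6 + (((6*q-1)/55)+1)/6) - (((q/55)+5)/6 + ((q/55)+1)/6)))
    (hc65 : c65 ≤ (((((6*q-1)/65)+5)/6 + (((6*q-1)/65)+1)/6) - (((q/65)+5)/6 + ((q/65)+1)/6)))
    (hc85 : c85 ≤ (((((6*q-1)/85)+5)/6 + (((6*q-1)/85)+1)/6) - (((q/85)+5)/6 + ((q/85)+1)/6)))
    (hc95 : c95 ≤ (((((6*q-1)/95)+5)/6 + (((6*q-1)/95)+1)/6) - (((q/95)+5)/6 + ((q/95)+1)/6)))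
    (hc115 : c115 ≤ (((((6*q-1)/115)+5)/6 + (((6*q-1)/115)+1)/6) - (((q/115)+5)/6 + ((q/115)+1)/6)))
    (hc77 : c77 ≤ (((((6*q-1)/77)+5)/6 + (((6*q-1)/77)+1)/6) - (((q/77)+5)/6 + ((q/77)+1)/6)))
    (hc91 : c91 ≤ (((((6*q-1)/91)+5)/6 + (((6*q-1)/91)+1)/6) - (((q/91)+5)/6 + ((q/91)+1)/6)))
    (hc119 : c119 ≤ (((((6*q-1)/119)+5)/6 + (((6*q-1)/119)+1)/6) - (((q/119)+5)/6 + ((q/119)+1)/6)))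
    (hc133 : c133 ≤ (((((6*q-1)/133)+5)/6 + (((6*q-1)/133)+1)/6) - (((q/133)+5)/6 + ((q/133)+1)/6)))
    (hc161 : c161 ≤ (((((6*q-1)/161)+5)/6 + (((6*q-1)/161)+1)/6) - (((q/161)+5)/6 + ((q/161)+1)/6)))
    (hc143 : c143 ≤ (((((6*q-1)/143)+5)/6 + (((6*q-1)/143)+1)/6) - (((q/143)+5)/6 + ((q/143)+1)/6)))
    (hc187 : c187 ≤ (((((6*q-1)/187)+5)/6 + (((6*q-1)/187)+1)/6) - (((q/187)+5)/6 + ((q/187)+1)/6)))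
    (hc209 : c209 ≤ (((((6*q-1)/209)+5)/6 + (((6*q-1)/209)+1)/6) - (((q/209)+5)/6 + ((q/209)+1)/6)))
    (hc253 : c253 ≤ (((((6*q-1)/253)+5)/6 + (((6*q-1)/253)+1)/6) - (((q/253)+5)/6 + ((q/253)+1)/6)))
    (hc221 : c221 ≤ (((((6*q-1)/221)+5)/6 + (((6*q-1)/221)+1)/6) - (((q/221)+5)/6 + ((q/221)+1)/6)))
    (hc247 : c247 ≤ (((((6*q-1)/247)+5)/6 + (((6*q-1)/247)+1)/6) - (((q/247)+5)/6 + ((q/247)+1)/6)))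
    (hc299 : c299 ≤ (((((6*q-1)/299)+5)/6 + (((6*q-1)/299)+1)/6) - (((q/299)+5)/6 + ((q/299)+1)/6)))
    (hc323 : c323 ≤ (((((6*q-1)/323)+5)/6 + (((6*q-1)/323)+1)/6) - (((q/323)+5)/6 + ((q/323)+1)/6)))
    (hc391 : c391 ≤ (((((6*q-1)/391)+5)/6 + (((6*q-1)/391)+1)/6) - (((q/391)+5)/6 + ((q/391)+1)/6)))
    (hc437 : c437 ≤ (((((6*q-1)/437)+5)/6 + (((6*q-1)/437)+1)/6) - (((q/437)+5)/6 + ((q/437)+1)/6)))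
    (hu : ((((q-1)+5)/6 + ((q-1)+1)/6) - (((q/5)+5)/6 + ((q/5)+1)/6)) + (((((6*q-1)/7)+5)/6 + (((6*q-1)/7)+1)/6) - (((q/7)+5)/6 + ((q/7)+1)/6)) + (((((6*q-1)/11)+5)/6 + (((6*q-1)/11)+1)/6) - (((q/11)+5)/6 + ((q/11)+1)/6)) + (((((6*q-1)/13)+5)/6 + (((6*q-1)/13)+1)/6) - (((q/13)+5)/6 + ((q/13)+1)/6)) + (((((6*q-1)/17)+5)/6 + (((6*q-1)/17)+1)/6) - (((q/17)+5)/6 + ((q/17)+1)/6)) + (((((6*q-1)/19)+5)/6 + (((6*q-1)/19)+1)/6) - (((q/19)+5)/6 + ((q/19)+1)/6)) + (((((6*q-1)/23)+5)/6 + (((6*q-1)/23)+1)/6) - (((q/23)+5)/6 + ((q/23)+1)/6)) ≤ u + (c35 + c55 + c65 + c85 + c95 + c115 + c77 + c91 + c119 + c133 + c161 + c143 + c187 + c209 + c253 + c221 + c247 + c299 + c323 + c391 + c437)) :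
    q - 1 < (((q-1)+5)/6 + ((q-1)+1)/6) + u := by
  rcases le_or_gt 750 q with hbig | hsmall
  · have ht0 := linT0 q h256
    have hs5 := lin5 q h256
    have hs7 := lin7 q h256
    have hs11 := lin11 q h256
    have hs13 := lin13 q h256
    have hs17 := lin17 q h256
    have hs19 := lin19 q h256
    have hs23 := lin23 q h256
    have m35 : 3*35*c35 ≤ 5*q + 6*35 := le_trans (Nat.mul_le_mul_left _ hc35) (linp35 q h256)
    have m55 : 3*55*c55 ≤ 5*q + 6*55 := le_trans (Nat.mul_le_mul_left _ hc55) (linp55 q h256)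
    have m65 : 3*65*c65 ≤ 5*q + 6*65 := le_trans (Nat.mul_le_mul_left _ hc65) (linp65 q h256)
    have m85 : 3*85*c85 ≤ 5*q + 6*85 := le_trans (Nat.mul_le_mul_left _ hc85) (linp85 q h256)
    have m95 : 3*95*c95 ≤ 5*q + 6*95 := le_trans (Nat.mul_le_mul_left _ hc95) (linp95 q h256)
    have m115 : 3*115*c115 ≤ 5*q + 6*115 := le_trans (Nat.mul_le_mul_left _ hc115) (linp115 q h256)
    have m77 : 3*77*c77 ≤ 5*q + 6*77 := le_trans (Nat.mul_le_mul_left _ hc77) (linp77 q h256)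
    have m91 : 3*91*c91 ≤ 5*q + 6*91 := le_trans (Nat.mul_le_mul_left _ hc91) (linp91 q h256)
    have m119 : 3*119*c119 ≤ 5*q + 6*119 := le_trans (Nat.mul_le_mul_left _ hc119) (linp119 q h256)
    have m133 : 3*133*c133 ≤ 5*q + 6*133 := le_trans (Nat.mul_le_mul_left _ hc133) (linp133 q h256)
    have m161 : 3*161*c161 ≤ 5*q + 6*161 := le_trans (Nat.mul_le_mul_left _ hc161) (linp161 q h256)
    have m143 : 3*143*c143 ≤ 5*q + 6*143 := le_trans (Nat.mul_le_mul_left _ hc143) (linp143 q h256)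
    have m187 : 3*187*c187 ≤ 5*q + 6*187 := le_trans (Nat.mul_le_mul_left _ hc187) (linp187 q h256)
    have m209 : 3*209*c209 ≤ 5*q + 6*209 := le_trans (Nat.mul_le_mul_left _ hc209) (linp209 q h256)
    have m253 : 3*253*c253 ≤ 5*q + 6*253 := le_trans (Nat.mul_le_mul_left _ hc253) (linp253 q h256)
    have m221 : 3*221*c221 ≤ 5*q + 6*221 := le_trans (Nat.mul_le_mul_left _ hc221) (linp221 q h256)
    have m247 : 3*247*c247 ≤ 5*q + 6*247 := le_trans (Nat.mul_le_mul_left _ hc247) (linp247 q h256)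
    have m299 : 3*299*c299 ≤ 5*q + 6*299 := le_trans (Nat.mul_le_mul_left _ hc299) (linp299 q h256)
    have m323 : 3*323*c323 ≤ 5*q + 6*323 := le_trans (Nat.mul_le_mul_left _ hc323) (linp323 q h256)
    have m391 : 3*391*c391 ≤ 5*q + 6*391 := le_trans (Nat.mul_le_mul_left _ hc391) (linp391 q h256)
    have m437 : 3*437*c437 ≤ 5*q + 6*437 := le_trans (Nat.mul_le_mul_left _ hc437) (linp437 q h256)
    clear hc35 hc55 hc65 hc85 hc95 hc115 hc77 hc91 hc119 hc133 hc161 hc143 hc187 hc209 hc253 hc221 hc247 hc299 hc323 hc391 hc437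
    omega
  · interval_cases q <;> omega


private lemma single_eq (q m hi : ℕ) (hm : 0 < m) (h : q / m ≤ hi) :
    ((hi+5)/6 + (hi+1)/6) - ((q/m+5)/6 + (q/m+1)/6) = (AA q m hi).card := by
  have h2 := AA_card q m hi hm h
  omega

private lemma pair_bound (q m1 m2 hi1 hi2 d : ℕ) (h1 : 0 < m1) (h2 : 0 < m2)
    (hco : Nat.Coprime m1 m2) (hb1 : m1 * hi1 ≤ 6*q-1) (hd : m1 * m2 = d) (hd0 : 0 < d)
    (hle : q / d ≤ (6*q-1)/d) :
    (AA q m1 hi1 ∩ AA q m2 hi2).card ≤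
      (((6*q-1)/d+5)/6 + ((6*q-1)/d+1)/6) - ((q/d+5)/6 + (q/d+1)/6) := by
  have ha := Finset.card_le_card (AA_inter q m1 m2 hi1 hi2 d h1 h2 hco hb1 hd)
  have hb := AA_card q d ((6*q-1)/d) hd0 hle
  omega

set_option maxHeartbeats 4000000 in
open Classical in
theorem smooth_totatives_card (q : ℕ) (hq : q.Prime) (hq' : 256 ≤ q) :
    q - 1 <
      ((Finset.Ioo 0 (6 * q)).filter
        (fun s => Nat.gcd s (6 * q) = 1 ∧ ∀ p : ℕ, p.Prime → p ∣ s → p < q)).card := by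
  have h6q : q ≤ 6*q-1 := by omega
  have h5le : q / 5 ≤ q - 1 := by omega
  have hb5 : 5*(q - 1) ≤ 6*q-1 := by omega
  have hb7 : 7*((6*q-1)/7) ≤ 6*q-1 := by clear * - ; omega
  have hb11 : 11*((6*q-1)/11) ≤ 6*q-1 := by clear * - ; omega
  have hb13 : 13*((6*q-1)/13) ≤ 6*q-1 := by clear * - ; omega
  have hb17 : 17*((6*q-1)/17) ≤ 6*q-1 := by clear * - ; omega
  have hb19 : 19*((6*q-1)/19) ≤ 6*q-1 := by clear * - ; omega
  have hb23 : 23*((6*q-1)/23) ≤ 6*q-1 := by clear * - ; omega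
  have hs5e := single_eq q 5 (q - 1) (by norm_num) h5le
  have hs7e := single_eq q 7 ((6*q-1)/7) (by norm_num) (Nat.div_le_div_right h6q)
  have hs11e := single_eq q 11 ((6*q-1)/11) (by norm_num) (Nat.div_le_div_right h6q)
  have hs13e := single_eq q 13 ((6*q-1)/13) (by norm_num) (Nat.div_le_div_right h6q)
  have hs17e := single_eq q 17 ((6*q-1)/17) (by norm_num) (Nat.div_le_div_right h6q)
  have hs19e := single_eq q 19 ((6*q-1)/19) (by norm_num) (Nat.div_le_div_right h6q)
  have hs23e := single_eq q 23 ((6*q-1)/23) (by norm_num) (Nat.div_le_div_right h6q)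
  have hc35 := pair_bound q 5 7 (q - 1) ((6*q-1)/7) 35 (by norm_num) (by norm_num) (by decide) hb5 (by norm_num) (by norm_num) (Nat.div_le_div_right h6q)
  have hc55 := pair_bound q 5 11 (q - 1) ((6*q-1)/11) 55 (by norm_num) (by norm_num) (by decide) hb5 (by norm_num) (by norm_num) (Nat.div_le_div_right h6q)
  have hc65 := pair_bound q 5 13 (q - 1) ((6*q-1)/13) 65 (by norm_num) (by norm_num) (by decide) hb5 (by norm_num) (by norm_num) (Nat.div_le_div_right h6q)
  have hc85 := pair_bound q 5 17 (q - 1) ((6*q-1)/17) 85 (by norm_num) (by norm_num) (by decide) hb5 (by norm_num) (by norm_num) (Nat.div_le_div_right h6q)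
  have hc95 := pair_bound q 5 19 (q - 1) ((6*q-1)/19) 95 (by norm_num) (by norm_num) (by decide) hb5 (by norm_num) (by norm_num) (Nat.div_le_div_right h6q)
  have hc115 := pair_bound q 5 23 (q - 1) ((6*q-1)/23) 115 (by norm_num) (by norm_num) (by decide) hb5 (by norm_num) (by norm_num) (Nat.div_le_div_right h6q)
  have hc77 := pair_bound q 7 11 ((6*q-1)/7) ((6*q-1)/11) 77 (by norm_num) (by norm_num) (by decide) hb7 (by norm_num) (by norm_num) (Nat.div_le_div_right h6q)
  have hc91 := pair_bound q 7 13 ((6*q-1)/7) ((6*q-1)/13) 91 (by norm_num) (by norm_num) (by decide) hb7 (by norm_num) (by norm_num) (Nat.div_le_div_right h6q)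
  have hc119 := pair_bound q 7 17 ((6*q-1)/7) ((6*q-1)/17) 119 (by norm_num) (by norm_num) (by decide) hb7 (by norm_num) (by norm_num) (Nat.div_le_div_right h6q)
  have hc133 := pair_bound q 7 19 ((6*q-1)/7) ((6*q-1)/19) 133 (by norm_num) (by norm_num) (by decide) hb7 (by norm_num) (by norm_num) (Nat.div_le_div_right h6q)
  have hc161 := pair_bound q 7 23 ((6*q-1)/7) ((6*q-1)/23) 161 (by norm_num) (by norm_num) (by decide) hb7 (by norm_num) (by norm_num) (Nat.div_le_div_right h6q)
  have hc143 := pair_bound q 11 13 ((6*q-1)/11) ((6*q-1)/13) 143 (by norm_num) (by norm_num) (by decide) hb11 (by norm_num) (by norm_num) (Nat.div_le_div_right h6q)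
  have hc187 := pair_bound q 11 17 ((6*q-1)/11) ((6*q-1)/17) 187 (by norm_num) (by norm_num) (by decide) hb11 (by norm_num) (by norm_num) (Nat.div_le_div_right h6q)
  have hc209 := pair_bound q 11 19 ((6*q-1)/11) ((6*q-1)/19) 209 (by norm_num) (by norm_num) (by decide) hb11 (by norm_num) (by norm_num) (Nat.div_le_div_right h6q)
  have hc253 := pair_bound q 11 23 ((6*q-1)/11) ((6*q-1)/23) 253 (by norm_num) (by norm_num) (by decide) hb11 (by norm_num) (by norm_num) (Nat.div_le_div_right h6q)
  have hc221 := pair_bound q 13 17 ((6*q-1)/13) ((6*q-1)/17) 221 (by norm_num) (by norm_num) (by decide) hb13 (by norm_num) (by norm_num) (Nat.div_le_div_right h6q)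
  have hc247 := pair_bound q 13 19 ((6*q-1)/13) ((6*q-1)/19) 247 (by norm_num) (by norm_num) (by decide) hb13 (by norm_num) (by norm_num) (Nat.div_le_div_right h6q)
  have hc299 := pair_bound q 13 23 ((6*q-1)/13) ((6*q-1)/23) 299 (by norm_num) (by norm_num) (by decide) hb13 (by norm_num) (by norm_num) (Nat.div_le_div_right h6q)
  have hc323 := pair_bound q 17 19 ((6*q-1)/17) ((6*q-1)/19) 323 (by norm_num) (by norm_num) (by decide) hb17 (by norm_num) (by norm_num) (Nat.div_le_div_right h6q)
  have hc391 := pair_bound q 17 23 ((6*q-1)/17) ((6*q-1)/23) 391 (by norm_num) (by norm_num) (by decide) hb17 (by norm_num) (by norm_num) (Nat.div_le_div_right h6q)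
  have hc437 := pair_bound q 19 23 ((6*q-1)/19) ((6*q-1)/23) 437 (by norm_num) (by norm_num) (by decide) hb19 (by norm_num) (by norm_num) (Nat.div_le_div_right h6q)
  have e5 := Finset.card_union_add_card_inter (AA q 19 ((6*q-1)/19)) (AA q 23 ((6*q-1)/23))
  have e4 := Finset.card_union_add_card_inter (AA q 17 ((6*q-1)/17)) (AA q 19 ((6*q-1)/19) ∪ (AA q 23 ((6*q-1)/23)))
  have e3 := Finset.card_union_add_card_inter (AA q 13 ((6*q-1)/13)) (AA q 17 ((6*q-1)/17) ∪ (AA q 19 ((6*q-1)/19) ∪ (AA q 23 ((6*q-1)/23))))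
  have e2 := Finset.card_union_add_card_inter (AA q 11 ((6*q-1)/11)) (AA q 13 ((6*q-1)/13) ∪ (AA q 17 ((6*q-1)/17) ∪ (AA q 19 ((6*q-1)/19) ∪ (AA q 23 ((6*q-1)/23)))))
  have e1 := Finset.card_union_add_card_inter (AA q 7 ((6*q-1)/7)) (AA q 11 ((6*q-1)/11) ∪ (AA q 13 ((6*q-1)/13) ∪ (AA q 17 ((6*q-1)/17) ∪ (AA q 19 ((6*q-1)/19) ∪ (AA q 23 ((6*q-1)/23))))))
  have e0 := Finset.card_union_add_card_inter (AA q 5 (q - 1)) (AA q 7 ((6*q-1)/7) ∪ (AA q 11 ((6*q-1)/11) ∪ (AA q 13 ((6*q-1)/13) ∪ (AA q 17 ((6*q-1)/17) ∪ (AA q 19 ((6*q-1)/19) ∪ (AA q 23 ((6*q-1)/23)))))))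
  have ib0 : ((AA q 5 (q - 1)) ∩ (AA q 7 ((6*q-1)/7) ∪ (AA q 11 ((6*q-1)/11) ∪ (AA q 13 ((6*q-1)/13) ∪ (AA q 17 ((6*q-1)/17) ∪ (AA q 19 ((6*q-1)/19) ∪ (AA q 23 ((6*q-1)/23)))))))).card ≤ (((AA q 5 (q - 1)) ∩ (AA q 7 ((6*q-1)/7))).card + (((AA q 5 (q - 1)) ∩ (AA q 11 ((6*q-1)/11))).card + (((AA q 5 (q - 1)) ∩ (AA q 13 ((6*q-1)/13))).card + (((AA q 5 (q - 1)) ∩ (AA q 17 ((6*q-1)/17))).card + (((AA q 5 (q - 1)) ∩ (AA q 19 ((6*q-1)/19))).card + ((AA q 5 (q - 1)) ∩ (AA q 23 ((6*q-1)/23))).card))))) := by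
    simp only [Finset.inter_union_distrib_left]
    exact ((Finset.card_union_le _ _).trans (Nat.add_le_add_left ((Finset.card_union_le _ _).trans (Nat.add_le_add_left ((Finset.card_union_le _ _).trans (Nat.add_le_add_left ((Finset.card_union_le _ _).trans (Nat.add_le_add_left (Finset.card_union_le _ _) _)) _)) _)) _))
  have ib1 : ((AA q 7 ((6*q-1)/7)) ∩ (AA q 11 ((6*q-1)/11) ∪ (AA q 13 ((6*q-1)/13) ∪ (AA q 17 ((6*q-1)/17) ∪ (AA q 19 ((6*q-1)/19) ∪ (AA q 23 ((6*q-1)/23))))))).card ≤ (((AA q 7 ((6*q-1)/7)) ∩ (AA q 11 ((6*q-1)/11))).card + (((AA q 7 ((6*q-1)/7)) ∩ (AA q 13 ((6*q-1)/13))).card + (((AA q 7 ((6*q-1)/7)) ∩ (AA q 17 ((6*q-1)/17))).card + (((AA q 7 ((6*q-1)/7)) ∩ (AA q 19 ((6*q-1)/19))).card + ((AA q 7 ((6*q-1)/7)) ∩ (AA q 23 ((6*q-1)/23))).card)))) := by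
    simp only [Finset.inter_union_distrib_left]
    exact ((Finset.card_union_le _ _).trans (Nat.add_le_add_left ((Finset.card_union_le _ _).trans (Nat.add_le_add_left ((Finset.card_union_le _ _).trans (Nat.add_le_add_left (Finset.card_union_le _ _) _)) _)) _))
  have ib2 : ((AA q 11 ((6*q-1)/11)) ∩ (AA q 13 ((6*q-1)/13) ∪ (AA q 17 ((6*q-1)/17) ∪ (AA q 19 ((6*q-1)/19) ∪ (AA q 23 ((6*q-1)/23)))))).card ≤ (((AA q 11 ((6*q-1)/11)) ∩ (AA q 13 ((6*q-1)/13))).card + (((AA q 11 ((6*q-1)/11)) ∩ (AA q 17 ((6*q-1)/17))).card + (((AA q 11 ((6*q-1)/11)) ∩ (AA q 19 ((6*q-1)/19))).card + ((AA q 11 ((6*q-1)/11)) ∩ (AA q 23 ((6*q-1)/23))).card))) := by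
    simp only [Finset.inter_union_distrib_left]
    exact ((Finset.card_union_le _ _).trans (Nat.add_le_add_left ((Finset.card_union_le _ _).trans (Nat.add_le_add_left (Finset.card_union_le _ _) _)) _))
  have ib3 : ((AA q 13 ((6*q-1)/13)) ∩ (AA q 17 ((6*q-1)/17) ∪ (AA q 19 ((6*q-1)/19) ∪ (AA q 23 ((6*q-1)/23))))).card ≤ (((AA q 13 ((6*q-1)/13)) ∩ (AA q 17 ((6*q-1)/17))).card + (((AA q 13 ((6*q-1)/13)) ∩ (AA q 19 ((6*q-1)/19))).card + ((AA q 13 ((6*q-1)/13)) ∩ (AA q 23 ((6*q-1)/23))).card)) := by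
    simp only [Finset.inter_union_distrib_left]
    exact ((Finset.card_union_le _ _).trans (Nat.add_le_add_left (Finset.card_union_le _ _) _))
  have ib4 : ((AA q 17 ((6*q-1)/17)) ∩ (AA q 19 ((6*q-1)/19) ∪ (AA q 23 ((6*q-1)/23)))).card ≤ (((AA q 17 ((6*q-1)/17)) ∩ (AA q 19 ((6*q-1)/19))).card + ((AA q 17 ((6*q-1)/17)) ∩ (AA q 23 ((6*q-1)/23))).card) := by
    simp only [Finset.inter_union_distrib_left]
    exact (Finset.card_union_le _ _)
  have hu : ((((q-1)+5)/6 + ((q-1)+1)/6) - (((q/5)+5)/6 + ((q/5)+1)/6)) + (((((6*q-1)/7)+5)/6 + (((6*q-1)/7)+1)/6) - (((q/7)+5)/6 + ((q/7)+1)/6)) + (((((6*q-1)/11)+5)/6 + (((6*q-1)/11)+1)/6) - (((q/11)+5)/6 + ((q/11)+1)/6)) + (((((6*q-1)/13)+5)/6 + (((6*q-1)/13)+1)/6) - (((q/13)+5)/6 + ((q/13)+1)/6)) + (((((6*q-1)/17)+5)/6 + (((6*q-1)/17)+1)/6) - (((q/17)+5)/6 + ((q/17)+1)/6)) + (((((6*q-1)/19)+5)/6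 + (((6*q-1)/19)+1)/6) - (((q/19)+5)/6 + ((q/19)+1)/6)) + (((((6*q-1)/23)+5)/6 + (((6*q-1)/23)+1)/6) - (((q/23)+5)/6 + ((q/23)+1)/6)) ≤ (AA q 5 (q - 1) ∪ (AA q 7 ((6*q-1)/7) ∪ (AA q 11 ((6*q-1)/11) ∪ (AA q 13 ((6*q-1)/13) ∪ (AA q 17 ((6*q-1)/17) ∪ (AA q 19 ((6*q-1)/19) ∪ (AA q 23 ((6*q-1)/23)))))))).card + (((AA q 5 (q - 1)) ∩ (AA q 7 ((6*q-1)/7))).card + ((AA q 5 (q - 1)) ∩ (AA q 11 ((6*q-1)/11))).card + ((AA q 5 (q - 1)) ∩ (AA q 13 ((6*q-1)/13))).card + ((AA q 5 (q - 1)) ∩ (AA q 17 ((6*q-1)/17))).card + ((AA q 5 (q - 1)) ∩ (AA q 19 ((6*q-1)/19))).card + ((AA q 5 (q - 1)) ∩ (AA q 23 ((6*q-1)/23))).card + ((AA q 7 ((6*q-1)/7)) ∩ (AA q 11 ((6*q-1)/11))).card + ((AA q 7 ((6*q-1)/7)) ∩ (AA q 13 ((6*q-1)/13))).card + ((AA q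 7 ((6*q-1)/7)) ∩ (AA q 17 ((6*q-1)/17))).card + ((AA q 7 ((6*q-1)/7)) ∩ (AA q 19 ((6*q-1)/19))).card + ((AA q 7 ((6*q-1)/7)) ∩ (AA q 23 ((6*q-1)/23))).card + ((AA q 11 ((6*q-1)/11)) ∩ (AA q 13 ((6*q-1)/13))).card + ((AA q 11 ((6*q-1)/11)) ∩ (AA q 17 ((6*q-1)/17))).card + ((AA q 11 ((6*q-1)/11)) ∩ (AA q 19 ((6*q-1)/19))).card + ((AA q 11 ((6*q-1)/11)) ∩ (AA q 23 ((6*q-1)/23))).card + ((AA q 13 ((6*q-1)/13)) ∩ (AA q 17 ((6*q-1)/17))).card + ((AA q 13 ((6*q-1)/13)) ∩ (AA q 19 ((6*q-1)/19))).card + ((AA q 13 ((6*q-1)/13)) ∩ (AA q 23 ((6*q-1)/23))).card + ((AA q 17 ((6*q-1)/17)) ∩ (AA q 19 ((6*q-1)/19))).card + ((AA q 17 ((6*q-1)/17)) ∩ (AA q 23 ((6*q-1)/23))).card + ((AA q 19 ((6*q-1)/19)) ∩ (AA q 23 ((6*q-1)/23))).card) := by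
    rw [hs5e, hs7e, hs11e, hs13e, hs17e, hs19e, hs23e]
    clear hs5e hs7e hs11e hs13e hs17e hs19e hs23e hc35 hc55 hc65 hc85 hc95 hc115 hc77 hc91 hc119 hc133 hc161 hc143 hc187 hc209 hc253 hc221 hc247 hc299 hc323 hc391 hc437 h6q h5le hb5 hb7 hb11 hb13 hb17 hb19 hb23
    omega
  have hkey := key q ((AA q 5 (q - 1)) ∩ (AA q 7 ((6*q-1)/7))).card ((AA q 5 (q - 1)) ∩ (AA q 11 ((6*q-1)/11))).card ((AA q 5 (q - 1)) ∩ (AA q 13 ((6*q-1)/13))).card ((AA q 5 (q - 1)) ∩ (AA q 17 ((6*q-1)/17))).card ((AA q 5 (q - 1)) ∩ (AA q 19 ((6*q-1)/19))).card ((AA q 5 (q - 1)) ∩ (AA q 23 ((6*q-1)/23))).card ((AA q 7 ((6*q-1)/7)) ∩ (AA q 11 ((6*q-1)/11))).card ((AA q 7 ((6*q-1)/7)) ∩ (AA q 13 ((6*q-1)/13))).card ((AA q 7 ((6*q-1)/7)) ∩ (AA q 17 ((6*q-1)/17))).card ((AA q 7 ((6*q-1)/7)) ∩ (AA q 19 ((6*q-1)/19))).card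 ((AA q 7 ((6*q-1)/7)) ∩ (AA q 23 ((6*q-1)/23))).card ((AA q 11 ((6*q-1)/11)) ∩ (AA q 13 ((6*q-1)/13))).card ((AA q 11 ((6*q-1)/11)) ∩ (AA q 17 ((6*q-1)/17))).card ((AA q 11 ((6*q-1)/11)) ∩ (AA q 19 ((6*q-1)/19))).card ((AA q 11 ((6*q-1)/11)) ∩ (AA q 23 ((6*q-1)/23))).card ((AA q 13 ((6*q-1)/13)) ∩ (AA q 17 ((6*q-1)/17))).card ((AA q 13 ((6*q-1)/13)) ∩ (AA q 19 ((6*q-1)/19))).card ((AA q 13 ((6*q-1)/13)) ∩ (AA q 23 ((6*q-1)/23))).card ((AA q 17 ((6*q-1)/17)) ∩ (AA q 19 ((6*q-1)/19))).card ((AA q 17 ((6*q-1)/17)) ∩ (AA q 23 ((6*q-1)/23))).card ((AA q 19 ((6*q-1)/19)) ∩ (AA q 23 ((6*q-1)/23))).card ((AA q 5 (q - 1) ∪ (AA q 7 ((6*q-1)/7) ∪ (AA q 11 ((6*q-1)/11) ∪ (AA q 13 ((6*q-1)/13) ∪ (AA q 17 ((6*q-1)/17) ∪ (AA q 19 ((6*q-1)/19)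 ∪ (AA q 23 ((6*q-1)/23)))))))).card) hq' hc35 hc55 hc65 hc85 hc95 hc115 hc77 hc91 hc119 hc133 hc161 hc143 hc187 hc209 hc253 hc221 hc247 hc299 hc323 hc391 hc437 hu
  have ht0e := cnt 0 (q-1) (show (0:ℕ) ≤ q-1 by clear * - hq'; omega)
  clear hu hc35 hc55 hc65 hc85 hc95 hc115 hc77 hc91 hc119 hc133 hc161 hc143 hc187 hc209 hc253 hc221 hc247 hc299 hc323 hc391 hc437 hs5e hs7e hs11e hs13e hs17e hs19e hs23e e0 e1 e2 e3 e4 e5 ib0 ib1 ib2 ib3 ib4 h6q h5le hb5 hb7 hb11 hb13 hb17 hb19 hb23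
  have hi5 : q - 1 < q := by clear * - hq'; omega
  have hm5 : 5*(q - 1) < 6*q := by clear * - hq'; omega
  have hi7 : (6*q-1)/7 < q := by clear * - hq'; omega
  have hm7 : 7*((6*q-1)/7) < 6*q := by clear * - hq'; omega
  have hi11 : (6*q-1)/11 < q := by clear * - hq'; omega
  have hm11 : 11*((6*q-1)/11) < 6*q := by clear * - hq'; omega
  have hi13 : (6*q-1)/13 < q := by clear * - hq'; omega
  have hm13 : 13*((6*q-1)/13) < 6*q := by clear * - hq'; omega
  have hi17 : (6*q-1)/17 < q := by clear * - hq'; omega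
  have hm17 : 17*((6*q-1)/17) < 6*q := by clear * - hq'; omega
  have hi19 : (6*q-1)/19 < q := by clear * - hq'; omega
  have hm19 : 19*((6*q-1)/19) < 6*q := by clear * - hq'; omega
  have hi23 : (6*q-1)/23 < q := by clear * - hq'; omega
  have hm23 : 23*((6*q-1)/23) < 6*q := by clear * - hq'; omega
  have hdisj : Disjoint ((Finset.Ioc 0 (q-1)).filter (fun t => t % 6 = 1 ∨ t % 6 = 5)) (AA q 5 (q - 1) ∪ (AA q 7 ((6*q-1)/7) ∪ (AA q 11 ((6*q-1)/11) ∪ (AA q 13 ((6*q-1)/13) ∪ (AA q 17 ((6*q-1)/17) ∪ (AA q 19 ((6*q-1)/19) ∪ (AA q 23 ((6*q-1)/23)))))))) := Finset.disjoint_left.mpr (by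
    intro x hx hxU
    have hx1 : x ≤ q - 1 := (Finset.mem_Ioc.mp (Finset.mem_filter.mp hx).1).2
    have hx2 : q < x := by
      rcases Finset.mem_union.mp hxU with h | h
      · exact AA_lb (by norm_num) h
      · 
        rcases Finset.mem_union.mp h with h | h
        · exact AA_lb (by norm_num) h
        · 
          rcases Finset.mem_union.mp h with h | h
          · exact AA_lb (by norm_num) h
          · 
            rcases Finset.mem_union.mp h with h | h
            · exact AA_lb (by norm_num) h
            · 
              rcases Finset.mem_union.mp h with h | h
              · exact AA_lb (by norm_num) h
              · 
                rcases Finset.mem_union.mp h with h | h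
                · exact AA_lb (by norm_num) h
                · exact AA_lb (by norm_num) h
    omega)
  refine lt_of_lt_of_le (b := (((Finset.Ioc 0 (q-1)).filter (fun t => t % 6 = 1 ∨ t % 6 = 5)) ∪ (AA q 5 (q - 1) ∪ (AA q 7 ((6*q-1)/7) ∪ (AA q 11 ((6*q-1)/11) ∪ (AA q 13 ((6*q-1)/13) ∪ (AA q 17 ((6*q-1)/17) ∪ (AA q 19 ((6*q-1)/19) ∪ (AA q 23 ((6*q-1)/23))))))))).card) ?_ (Finset.card_le_card ?_)
  · rw [Finset.card_union_of_disjoint hdisj]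
    clear hdisj
    omega
  · intro x hx
    rcases Finset.mem_union.mp hx with h | h
    · obtain ⟨hIoc, hp⟩ := Finset.mem_filter.mp h
      obtain ⟨h0, hle⟩ := Finset.mem_Ioc.mp hIoc
      refine Finset.mem_filter.mpr ⟨Finset.mem_Ioo.mpr ⟨h0, by clear * - hq' hle; omega⟩, ?_, ?_⟩
      · have h6 : Nat.gcd x 6 = 1 := (mod_iff x).mpr hp
        have hxq : Nat.Coprime x q := Nat.Coprime.symm ((Nat.Prime.coprime_iff_not_dvd hq).mpr (fun hd => by have := Nat.le_of_dvd h0 hd; clear * - hq' hle this; omega))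
        exact Nat.Coprime.mul_right h6 hxq
      · intro p hp' hpd
        have := Nat.le_of_dvd h0 hpd
        clear * - hq' hle this
        omega
    · have hx' : 0 < x ∧ x < 6*q ∧ Nat.gcd x (6*q) = 1 ∧ ∀ p : ℕ, p.Prime → p ∣ x → p < q := by
        rcases Finset.mem_union.mp h with h | h
        · exact AA_mem hq hq' (by norm_num) (by norm_num) (by decide) hi5 hm5 h
        · 
          rcases Finset.mem_union.mp h with h | h
          · exact AA_mem hq hq' (by norm_num) (by norm_num) (by decide) hi7 hm7 h
          · 
            rcases Finset.mem_union.mp h with h | h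
            · exact AA_mem hq hq' (by norm_num) (by norm_num) (by decide) hi11 hm11 h
            · 
              rcases Finset.mem_union.mp h with h | h
              · exact AA_mem hq hq' (by norm_num) (by norm_num) (by decide) hi13 hm13 h
              · 
                rcases Finset.mem_union.mp h with h | h
                · exact AA_mem hq hq' (by norm_num) (by norm_num) (by decide) hi17 hm17 h
                · 
                  rcases Finset.mem_union.mp h with h | h
                  · exact AA_mem hq hq' (by norm_num) (by norm_num) (by decide) hi19 hm19 h
                  · exact AA_mem hq hq' (by norm_num) (by norm_num) (by decide) hi23 hm23 h
      exact Finset.mem_filter.mpr ⟨Finset.mem_Ioo.mpr ⟨hx'.1, hx'.2.1⟩, hx'.2.2.1, hx'.2.2.2⟩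
end

section
/- The integer 5 belongs to the wild semigroup W; explicitly, 5 = (1/2)^2 · g(3)^2 · g(5) · g(8) · g(27) · g(32) · g(41), where g(n) = (3n+2)/(2n+1). -/
/-- g(n) = (3n+2)/(2n+1). -/
def wildG (n : ℕ) : ℚ := (3 * n + 2) / (2 * n + 1)

/-- The wild semigroup, generated by 1/2 and all g(n), n ≥ 0. -/
def wildSemigroup : Subsemigroup ℚ :=
  Subsemigroup.closure ({1/2} ∪ Set.range wildG)

theorem five_mem_wild :
    (5 : ℚ) ∈ wildSemigroup ∧
    (5 : ℚ) = (1/2) ^ 2 * wildG 3 ^ 2 * wildG 5 * wildG 8 * wildG 27 * wildG 32 *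
      wildG 41 := by
  have hid : (5 : ℚ) = (1/2) ^ 2 * wildG 3 ^ 2 * wildG 5 * wildG 8 * wildG 27 * wildG 32 *
      wildG 41 := by
    norm_num [wildG]
  refine ⟨?_, hid⟩
  have hh : (1/2 : ℚ) ∈ wildSemigroup :=
    Subsemigroup.subset_closure (Set.mem_union_left _ rfl)
  have hg : ∀ n : ℕ, wildG n ∈ wildSemigroup := fun n =>
    Subsemigroup.subset_closure (Set.mem_union_right _ ⟨n, rfl⟩)
  have h1 : ((1/2 : ℚ)) ^ 2 ∈ wildSemigroup := by rw [sq]; exact mul_mem hh hh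
  have h2 : (wildG 3) ^ 2 ∈ wildSemigroup := by rw [sq]; exact mul_mem (hg 3) (hg 3)
  have h3 : ((1/2 : ℚ)) ^ 2 * wildG 3 ^ 2 ∈ wildSemigroup := mul_mem h1 h2
  have h4 : ((1/2 : ℚ)) ^ 2 * wildG 3 ^ 2 * wildG 5 ∈ wildSemigroup := mul_mem h3 (hg 5)
  have h5 : ((1/2 : ℚ)) ^ 2 * wildG 3 ^ 2 * wildG 5 * wildG 8 ∈ wildSemigroup := mul_mem h4 (hg 8)
  have h6 : ((1/2 : ℚ)) ^ 2 * wildG 3 ^ 2 * wildG 5 * wildG 8 * wildG 27 ∈ wildSemigroup := mul_mem h5 (hg 27)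
  have h7 : ((1/2 : ℚ)) ^ 2 * wildG 3 ^ 2 * wildG 5 * wildG 8 * wildG 27 * wildG 32 ∈ wildSemigroup := mul_mem h6 (hg 32)
  have h8 : ((1/2 : ℚ)) ^ 2 * wildG 3 ^ 2 * wildG 5 * wildG 8 * wildG 27 * wildG 32 * wildG 41 ∈ wildSemigroup := mul_mem h7 (hg 41)
  rw [hid]; exact h8
end

section
/- The integer 7 belongs to the wild semigroup W; explicitly, 7 = (1/2)^2 · g(3) · g(8) · g(11) · g(71) · g(99) · g(107) · g(123) · g(132), where g(n) = (3n+2)/(2n+1). -/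
theorem seven_mem_wild :
    (7 : ℚ) ∈ wildSemigroup ∧
    (7 : ℚ) = (1/2) ^ 2 * wildG 3 * wildG 8 * wildG 11 * wildG 71 * wildG 99 *
      wildG 107 * wildG 123 * wildG 132 := by
  have heq : (7 : ℚ) = (1/2) ^ 2 * wildG 3 * wildG 8 * wildG 11 * wildG 71 * wildG 99 *
      wildG 107 * wildG 123 * wildG 132 := by
    norm_num [wildG]
  refine ⟨?_, heq⟩
  have hhalf : (1/2 : ℚ) ∈ wildSemigroup :=
    Subsemigroup.subset_closure (Or.inl rfl)
  have hg : ∀ n : ℕ, wildG n ∈ wildSemigroup := fun n =>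
    Subsemigroup.subset_closure (Or.inr ⟨n, rfl⟩)
  rw [heq, sq]
  exact mul_mem (mul_mem (mul_mem (mul_mem (mul_mem (mul_mem (mul_mem (mul_mem
    (mul_mem hhalf hhalf) (hg 3)) (hg 8)) (hg 11)) (hg 71)) (hg 99)) (hg 107)) (hg 123)) (hg 132)
end

section
/- The integer 11 belongs to the wild semigroup W; explicitly, 11 = (1/2)^2 · g(3)^2 · g(8) · g(11) · g(71) · g(99) · g(107) · g(123) · g(132), where g(n) = (3n+2)/(2n+1). -/
theorem eleven_mem_wild :
    (11 : ℚ) ∈ wildSemigroup ∧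
    (11 : ℚ) = (1/2) ^ 2 * wildG 3 ^ 2 * wildG 8 * wildG 11 * wildG 71 * wildG 99 *
      wildG 107 * wildG 123 * wildG 132 := by
  have heq : (11 : ℚ) = (1/2) ^ 2 * wildG 3 ^ 2 * wildG 8 * wildG 11 * wildG 71 * wildG 99 *
      wildG 107 * wildG 123 * wildG 132 := by
    norm_num [wildG]
  refine ⟨?_, heq⟩
  have hhalf : (1/2 : ℚ) ∈ wildSemigroup :=
    Subsemigroup.subset_closure (Or.inl rfl)
  have hg : ∀ n : ℕ, wildG n ∈ wildSemigroup := fun n =>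
    Subsemigroup.subset_closure (Or.inr ⟨n, rfl⟩)
  rw [heq, sq, sq]
  repeat
    first
      | exact hhalf
      | exact hg _
      | apply wildSemigroup.mul_mem
end
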